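/- Given positive integers n and d with 3 ≤ d+1 ≤ n, let Γ be the digraph with vertex set {v_1, v_2, …, v_n} and arc set (⋃_{i=1}^{n−d+1} {(v_n, v_i), (v_i, v_{n−d+2})}) ∪ {(v_j, v_{j+1}) : j = n−d+2, …, n−1}. Then Γ is strongly connected, has n vertices, has diameter d, and dim(Γ) = n − d. -/

import Mathlib

/-!  Common definitions for weak metric dimension of digraphs.

A digraph is modelled by a vertex type `V` together with an arc relation
`A : V → V → Prop` (simplicity is expressed by `Irreflexive A`). -/

/-- There is a directed walk of length `n` from `x` to `y`. -/
def walkLen {V : Type*} (A : V → V → Prop) : ℕ → V → V → Prop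
  | 0 => fun x y => x = y
  | n + 1 => fun x y => ∃ z, A x z ∧ walkLen A n z y

/-- `∂(x,y)`: the length of a shortest directed path from `x` to `y`. -/
noncomputable def ddist {V : Type*} (A : V → V → Prop) (x y : V) : ℕ :=
  sInf {n | walkLen A n x y}

/-- The two way distance `∂̃(x,y) = (∂(x,y), ∂(y,x))`. -/
noncomputable def twoDist {V : Type*} (A : V → V → Prop) (x y : V) : ℕ × ℕ :=
  (ddist A x y, ddist A y x)

/-- Strong connectivity: any vertex can be reached from any vertex by a directed walk. -/
def IsStronglyConnected {V : Type*} (A : V → V → Prop) : Prop :=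
  ∀ x y : V, ∃ n, walkLen A n x y

/-- `S` is a weakly resolving set: distinct vertices have different tuples of
two way distances from the vertices of `S`. -/
def IsWeaklyResolving {V : Type*} (A : V → V → Prop) (S : Set V) : Prop :=
  ∀ u v : V, (∀ w ∈ S, twoDist A w u = twoDist A w v) → u = v

/-- The weak metric dimension: minimum cardinality of a weakly resolving set. -/
noncomputable def wdim {V : Type*} [Fintype V] (A : V → V → Prop) : ℕ :=
  sInf {k | ∃ S : Finset V, S.card = k ∧ IsWeaklyResolving A ↑S}

/-- The diameter: the maximum of `∂(x,y)` over all ordered pairs of vertices. -/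
noncomputable def diam {V : Type*} [Fintype V] (A : V → V → Prop) : ℕ :=
  sSup {m | ∃ x y : V, ddist A x y = m}

/-- `f(n,d)`: the least positive integer `k` with `k + d^(2k) ≥ n`. -/
noncomputable def fnd (n d : ℕ) : ℕ :=
  sInf {k | 0 < k ∧ n ≤ k + d ^ (2 * k)}

/-- An isomorphism from `(V, A)` onto `(W, B)` exists. -/
def IsIsoTo {V W : Type*} (A : V → V → Prop) (B : W → W → Prop) : Prop :=
  ∃ e : V ≃ W, ∀ x y, A x y ↔ B (e x) (e y)

/-- The digraph of Example 2.3: vertices `v_1, …, v_n` are the elements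
`0, …, n-1` of `Fin n` (so `v_i` is `i - 1`). -/
def egArc (n d : ℕ) : Fin n → Fin n → Prop := fun x y =>
  (x.val = n - 1 ∧ y.val ≤ n - d) ∨
  (x.val ≤ n - d ∧ y.val = n - d + 1) ∨
  (n - d + 1 ≤ x.val ∧ x.val ≤ n - 2 ∧ y.val = x.val + 1)

/-- The `r`-th (0-based) coordinate of the tuple `v_{j+1}` in Construction 2.4;
it lies in `{1, …, d}` and `j = Σ_r (coord r - 1) d^r`. -/
def gcoord (d j r : ℕ) : ℕ := j / d ^ r % d + 1

/-- The arc relation of Construction 2.4, with the `u`-vertices `Fin k` on the left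
and the `v`-vertices `Fin m` on the right of the sum. -/
def gammaArcKM (d k : ℕ) {m : ℕ} : Fin k ⊕ Fin m → Fin k ⊕ Fin m → Prop
  | .inl _, .inl _ => False
  | .inl i, .inr j => gcoord d j.val (2 * i.val) = 1
  | .inr j, .inl i => gcoord d j.val (2 * i.val + 1) = 1
  | .inr j, .inr l => j ≠ l ∧ ∀ r < k,
      gcoord d l.val (2 * r) ≤ gcoord d j.val (2 * r) + 1 ∧
      gcoord d j.val (2 * r + 1) ≤ gcoord d l.val (2 * r + 1) + 1

/-- The arc relation of `Γ̄`: `Γ` of Construction 2.4 together with symmetric arcs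
between any two distinct `u`-vertices. -/
def gammaBarArcKM (d k : ℕ) {m : ℕ} : Fin k ⊕ Fin m → Fin k ⊕ Fin m → Prop
  | .inl i, .inl i' => i ≠ i'
  | x, y => gammaArcKM d k x y

/-- The directed cycle of length `m` on `Fin m`. -/
def cycArc (m : ℕ) [NeZero m] : Fin m → Fin m → Prop := fun x y => y = x + 1

/-- `σ` is an automorphism of the digraph `(V, A)`. -/
def IsDigraphAuto {V : Type*} (A : V → V → Prop) (σ : V ≃ V) : Prop :=
  ∀ a b, A a b ↔ A (σ a) (σ b)

/-- Vertex-transitivity. -/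
def IsVertexTransitive {V : Type*} (A : V → V → Prop) : Prop :=
  ∀ x y : V, ∃ σ : V ≃ V, IsDigraphAuto A σ ∧ σ x = y

/-- Weak distance-transitivity. -/
def IsWeaklyDistanceTransitive {V : Type*} (A : V → V → Prop) : Prop :=
  ∀ x y x' y' : V, twoDist A x y = twoDist A x' y' →
    ∃ σ : V ≃ V, IsDigraphAuto A σ ∧ σ x = x' ∧ σ y = y'

/-- Weak distance-regularity. -/
noncomputable def IsWeaklyDistanceRegular {V : Type*} (A : V → V → Prop) : Prop :=
  ∀ i j : ℕ × ℕ, (∃ a b : V, twoDist A a b = i) → (∃ a b : V, twoDist A a b = j) →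
    ∀ x y x' y' : V, twoDist A x y = twoDist A x' y' →
      Set.ncard {z : V | twoDist A x z = i ∧ twoDist A z y = j} =
      Set.ncard {z : V | twoDist A x' z = i ∧ twoDist A z y' = j}

/-- The complete digraph `K_t`. -/
def Krel (t : ℕ) : Fin t → Fin t → Prop := fun x y => x ≠ y

/-- The null digraph `K̄_t`. -/
def Nrel (t : ℕ) : Fin t → Fin t → Prop := fun _ _ => False

/-- The directed path `P_2` of length `1`. -/
def P2rel : Fin 2 → Fin 2 → Prop := fun x y => x = 0 ∧ y = 1

/-- The digraph `G_1` on `{0,1,2}` with arcs `(0,1),(1,2),(2,1),(2,0)`. -/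
def G1rel : Fin 3 → Fin 3 → Prop := fun x y =>
  (x = 0 ∧ y = 1) ∨ (x = 1 ∧ y = 2) ∨ (x = 2 ∧ y = 1) ∨ (x = 2 ∧ y = 0)

/-- The digraph `G_2` on `{0,1,2}` with arcs `(0,1),(1,0),(1,2),(2,1),(2,0)`. -/
def G2rel : Fin 3 → Fin 3 → Prop := fun x y =>
  (x = 0 ∧ y = 1) ∨ (x = 1 ∧ y = 0) ∨ (x = 1 ∧ y = 2) ∨ (x = 2 ∧ y = 1) ∨ (x = 2 ∧ y = 0)

/-- The generalized lexicographic product `G[H₀, H₁, H₂]` for a digraph `G` on `{0,1,2}`. -/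
def glex3 {α β γ : Type*} (G : Fin 3 → Fin 3 → Prop)
    (H0 : α → α → Prop) (H1 : β → β → Prop) (H2 : γ → γ → Prop) :
    α ⊕ β ⊕ γ → α ⊕ β ⊕ γ → Prop
  | .inl x, .inl y => H0 x y
  | .inl _, .inr (.inl _) => G 0 1
  | .inl _, .inr (.inr _) => G 0 2
  | .inr (.inl _), .inl _ => G 1 0
  | .inr (.inl x), .inr (.inl y) => H1 x y
  | .inr (.inl _), .inr (.inr _) => G 1 2
  | .inr (.inr _), .inl _ => G 2 0
  | .inr (.inr _), .inr (.inl _) => G 2 1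
  | .inr (.inr x), .inr (.inr y) => H2 x y

/-- A clique in a digraph: the two way distance between any two distinct
vertices of `S` is `(1,1)`. -/
noncomputable def DClique {V : Type*} (A : V → V → Prop) (S : Set V) : Prop :=
  ∀ u ∈ S, ∀ v ∈ S, u ≠ v → twoDist A u v = (1, 1)

/-- An independent set in a digraph: no arcs inside `R`. -/
def DIndependent {V : Type*} (A : V → V → Prop) (R : Set V) : Prop :=
  ∀ u ∈ R, ∀ v ∈ R, ¬ A u v

/-!
The vertices `v_1, …, v_{n-d+1}` all have the single out-neighbour `v_{n-d+2}` and the single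
in-neighbour `v_n`, so any two of them are exchanged by an automorphism; a weakly resolving set
therefore misses at most one of them, whence `dim(Γ) ≥ n - d`. Each of them closes the path
`v_{n-d+2} → ⋯ → v_n` to a directed `d`-cycle, so every distance is at most `d`, with equality
from `v_1` to `v_{n-d+1}`. The distances from `v_1` already separate `v_{n-d+1}, …, v_n`,
so `{v_1, …, v_{n-d}}` is weakly resolving.
-/

section Digraph

variable {V : Type*} {A : V → V → Prop}

theorem walkLen_add {m k : ℕ} {x y z : V} (hxy : walkLen A m x y) (hyz : walkLen A k y z) :
    walkLen A (m + k) x z := by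
  induction m generalizing x with
  | zero => rw [Nat.zero_add]; exact (hxy : x = y) ▸ hyz
  | succ m ih =>
    obtain ⟨w, hxw, hwy⟩ := hxy
    rw [Nat.succ_add]
    exact ⟨w, hxw, ih hwy⟩

theorem walkLen_one {x y : V} (h : A x y) : walkLen A 1 x y := ⟨y, h, rfl⟩

theorem walkLen_map {W : Type*} {B : W → W → Prop} {f : V → W}
    (hf : ∀ x y, A x y → B (f x) (f y)) {m : ℕ} {x y : V} (h : walkLen A m x y) :
    walkLen B m (f x) (f y) := by
  induction m generalizing x with
  | zero => exact congrArg f h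
  | succ m ih =>
    obtain ⟨z, hxz, hzy⟩ := h
    exact ⟨f z, hf x z hxz, ih hzy⟩

theorem le_add_of_walkLen {f : V → ℕ} (hf : ∀ a b, A a b → f b ≤ f a + 1) {m : ℕ} {x y : V}
    (h : walkLen A m x y) : f y ≤ f x + m := by
  induction m generalizing x with
  | zero => exact (h : x = y) ▸ Nat.le_refl _
  | succ m ih =>
    obtain ⟨z, hxz, hzy⟩ := h
    have := hf x z hxz
    have := ih hzy
    omega

theorem ddist_le_of_walkLen {m : ℕ} {x y : V} (h : walkLen A m x y) : ddist A x y ≤ m :=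
  Nat.sInf_le h

theorem walkLen_ddist {m : ℕ} {x y : V} (h : walkLen A m x y) :
    walkLen A (ddist A x y) x y :=
  Nat.sInf_mem (s := {k | walkLen A k x y}) ⟨m, h⟩

theorem ddist_eq_of_potential (f : V → ℕ) (hf : ∀ a b, A a b → f b ≤ f a + 1) {x y : V}
    (hx : f x = 0) (h : walkLen A (f y) x y) : ddist A x y = f y := by
  have := le_add_of_walkLen hf (walkLen_ddist h)
  exact le_antisymm (ddist_le_of_walkLen h) (by omega)

theorem eq_of_ddist_eq_zero (hA : IsStronglyConnected A) {x y : V} (h : ddist A x y = 0) :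
    x = y := by
  obtain ⟨m, hm⟩ := hA x y
  have h0 := walkLen_ddist hm
  rw [h] at h0
  exact h0

theorem twoDist_self (x : V) : twoDist A x x = (0, 0) := by
  have : ddist A x x = 0 := Nat.le_zero.mp (ddist_le_of_walkLen (rfl : walkLen A 0 x x))
  simp only [twoDist, this]

theorem IsDigraphAuto.symm {σ : V ≃ V} (h : IsDigraphAuto A σ) : IsDigraphAuto A σ.symm := by
  intro a b
  rw [h (σ.symm a) (σ.symm b), σ.apply_symm_apply, σ.apply_symm_apply]

theorem IsDigraphAuto.ddist_apply {σ : V ≃ V} (h : IsDigraphAuto A σ) (x y : V) :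
    ddist A (σ x) (σ y) = ddist A x y := by
  unfold ddist
  congr 1
  ext m
  refine ⟨fun hm => ?_, walkLen_map (fun a b => (h a b).mp)⟩
  have := walkLen_map (fun a b => (h.symm a b).mp) (hm : walkLen A m (σ x) (σ y))
  rwa [σ.symm_apply_apply, σ.symm_apply_apply] at this

theorem IsDigraphAuto.twoDist_apply {σ : V ≃ V} (h : IsDigraphAuto A σ) (x y : V) :
    twoDist A (σ x) (σ y) = twoDist A x y := by
  simp only [twoDist, h.ddist_apply]

theorem isDigraphAuto_swap [DecidableEq V] {a b : V} (hout : ∀ z, A a z ↔ A b z)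
    (hin : ∀ z, A z a ↔ A z b) : IsDigraphAuto A (Equiv.swap a b) := by
  have hleft : ∀ x y, A (Equiv.swap a b x) y ↔ A x y := by
    intro x y
    rw [Equiv.swap_apply_def]
    split_ifs with hxa hxb
    · rw [hxa, hout]
    · rw [hxb, hout]
    · rfl
  have hright : ∀ x y, A x (Equiv.swap a b y) ↔ A x y := by
    intro x y
    rw [Equiv.swap_apply_def]
    split_ifs with hya hyb
    · rw [hya, hin]
    · rw [hyb, hin]
    · rfl
  intro x y
  rw [hleft, hright]

theorem IsWeaklyResolving.mem_or_mem_of_isDigraphAuto_swap [DecidableEq V] {S : Set V}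
    (hS : IsWeaklyResolving A S) {a b : V} (hab : a ≠ b)
    (hσ : IsDigraphAuto A (Equiv.swap a b)) : a ∈ S ∨ b ∈ S := by
  by_contra! hout
  refine hab (hS a b fun w hw => ?_)
  have hw : Equiv.swap a b w = w :=
    Equiv.swap_apply_of_ne_of_ne (fun h => hout.1 (h ▸ hw)) (fun h => hout.2 (h ▸ hw))
  rw [← hσ.twoDist_apply w a, hw, Equiv.swap_apply_left]

theorem isWeaklyResolving_of_forall_not_mem (hA : IsStronglyConnected A) {S : Set V}
    (h : ∀ u v, u ∉ S → v ∉ S → (∀ w ∈ S, twoDist A w u = twoDist A w v) → u = v) :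
    IsWeaklyResolving A S := by
  intro u v huv
  by_cases hu : u ∈ S
  · have := congrArg Prod.fst (huv u hu)
    rw [twoDist_self] at this
    exact eq_of_ddist_eq_zero hA this.symm
  by_cases hv : v ∈ S
  · have := congrArg Prod.snd (huv v hv)
    rw [twoDist_self] at this
    exact eq_of_ddist_eq_zero hA this
  exact h u v hu hv huv

theorem diam_eq_of_forall_le [Fintype V] {k : ℕ} (hle : ∀ x y, ddist A x y ≤ k)
    (hk : ∃ x y, ddist A x y = k) : diam A = k := by
  have hub : k ∈ upperBounds {m | ∃ x y : V, ddist A x y = m} := by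
    rintro m ⟨x, y, rfl⟩
    exact hle x y
  exact le_antisymm (csSup_le ⟨k, hk⟩ hub) (le_csSup ⟨k, hub⟩ hk)

theorem wdim_eq_of_forall_le [Fintype V] {k : ℕ}
    (hle : ∀ S : Finset V, IsWeaklyResolving A ↑S → k ≤ S.card)
    (hk : ∃ S : Finset V, S.card = k ∧ IsWeaklyResolving A ↑S) : wdim A = k := by
  refine le_antisymm (Nat.sInf_le hk) (le_csInf ⟨k, hk⟩ ?_)
  rintro m ⟨S, rfl, hS⟩
  exact hle S hS

end Digraph

section Example

variable {n d : ℕ}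

theorem walkLen_egArc_of_chain {x y : Fin n} (hx : n - d + 1 ≤ x.val) (hxy : x.val ≤ y.val) :
    walkLen (egArc n d) (y.val - x.val) x y := by
  obtain ⟨k, hk⟩ : ∃ k, y.val = x.val + k := ⟨_, (Nat.add_sub_cancel' hxy).symm⟩
  rw [hk, Nat.add_sub_cancel_left]
  clear hxy
  induction k generalizing x with
  | zero => exact Fin.ext hk.symm
  | succ k ih =>
    have hx1 : x.val + 1 < n := by omega
    exact ⟨⟨x.val + 1, hx1⟩, Or.inr (Or.inr ⟨hx, by omega, rfl⟩),
      ih (Nat.le_succ_of_le hx) (by simp only; omega)⟩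

theorem walkLen_egArc_of_low_of_chain {x y : Fin n} (hx : x.val ≤ n - d)
    (hy : n - d + 1 ≤ y.val) : walkLen (egArc n d) (y.val - (n - d)) x y := by
  have hub : n - d + 1 < n := by omega
  have harc : egArc n d x ⟨n - d + 1, hub⟩ := Or.inr (Or.inl ⟨hx, rfl⟩)
  have := walkLen_add (walkLen_one harc) (walkLen_egArc_of_chain (y := y) le_rfl hy)
  rwa [show 1 + (y.val - (n - d + 1)) = y.val - (n - d) by omega] at this

theorem walkLen_egArc_of_chain_of_low {x y : Fin n} (hx : n - d + 1 ≤ x.val)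
    (hy : y.val ≤ n - d) : walkLen (egArc n d) (n - x.val) x y := by
  have hlast : n - 1 < n := by omega
  have harc : egArc n d ⟨n - 1, hlast⟩ y := Or.inl ⟨rfl, hy⟩
  have := walkLen_add (walkLen_egArc_of_chain (y := ⟨n - 1, hlast⟩) hx (by simp only; omega))
    (walkLen_one harc)
  rwa [show n - 1 - x.val + 1 = n - x.val by omega] at this

theorem walkLen_egArc_of_low (hd : 2 ≤ d) (hn : d + 1 ≤ n) {x y : Fin n} (hx : x.val ≤ n - d)
    (hy : y.val ≤ n - d) : walkLen (egArc n d) d x y := by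
  have hlast : n - 1 < n := by omega
  have harc : egArc n d ⟨n - 1, hlast⟩ y := Or.inl ⟨rfl, hy⟩
  have := walkLen_add
    (walkLen_egArc_of_low_of_chain (y := ⟨n - 1, hlast⟩) hx (by simp only; omega))
    (walkLen_one harc)
  rwa [show n - 1 - (n - d) + 1 = d by omega] at this

theorem exists_walkLen_egArc_le (hd : 2 ≤ d) (hn : d + 1 ≤ n) (x y : Fin n) :
    ∃ m ≤ d, walkLen (egArc n d) m x y := by
  have := x.isLt
  have := y.isLt
  rcases le_or_gt x.val (n - d) with hx | hx <;> rcases le_or_gt y.val (n - d) with hy | hy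
  · exact ⟨d, le_rfl, walkLen_egArc_of_low hd hn hx hy⟩
  · exact ⟨_, by omega, walkLen_egArc_of_low_of_chain hx hy⟩
  · exact ⟨_, by omega, walkLen_egArc_of_chain_of_low hx hy⟩
  rcases le_or_gt x.val y.val with hxy | hxy
  · exact ⟨_, by omega, walkLen_egArc_of_chain hx hxy⟩
  · let v₁ : Fin n := ⟨0, by omega⟩
    exact ⟨_, by omega, walkLen_add (walkLen_egArc_of_chain_of_low (y := v₁) hx (Nat.zero_le _))
      (walkLen_egArc_of_low_of_chain (Nat.zero_le _) hy)⟩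

theorem isStronglyConnected_egArc (hd : 2 ≤ d) (hn : d + 1 ≤ n) :
    IsStronglyConnected (egArc n d) := fun x y =>
  (exists_walkLen_egArc_le hd hn x y).imp fun _ => And.right

def egDistFromZero (n d : ℕ) (y : Fin n) : ℕ :=
  if y.val = 0 then 0 else if y.val ≤ n - d then d else y.val - (n - d)

theorem ddist_egArc_zero (hd : 2 ≤ d) (hn : d + 1 ≤ n) (y : Fin n) :
    ddist (egArc n d) ⟨0, by omega⟩ y = egDistFromZero n d y := by
  refine ddist_eq_of_potential _ (fun a b hab => ?_) (by simp [egDistFromZero]) ?_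
  · have := a.isLt
    unfold egArc at hab
    unfold egDistFromZero
    split_ifs <;> omega
  · unfold egDistFromZero
    split_ifs with hy0 hyL
    · exact Fin.ext hy0.symm
    · exact walkLen_egArc_of_low hd hn (Nat.zero_le _) hyL
    · exact walkLen_egArc_of_low_of_chain (Nat.zero_le _) (by omega)

theorem diam_egArc (hd : 2 ≤ d) (hn : d + 1 ≤ n) : diam (egArc n d) = d := by
  refine diam_eq_of_forall_le (fun x y => ?_) ⟨⟨0, by omega⟩, ⟨n - d, by omega⟩, ?_⟩
  · obtain ⟨m, hmd, hm⟩ := exists_walkLen_egArc_le hd hn x y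
    exact (ddist_le_of_walkLen hm).trans hmd
  · rw [ddist_egArc_zero hd hn]
    simp only [egDistFromZero]
    split_ifs <;> omega

theorem isDigraphAuto_egArc_swap (hd : 2 ≤ d) (hn : d + 1 ≤ n) {a b : Fin n}
    (ha : a.val ≤ n - d) (hb : b.val ≤ n - d) : IsDigraphAuto (egArc n d) (Equiv.swap a b) := by
  refine isDigraphAuto_swap (fun z => ?_) (fun z => ?_) <;> unfold egArc <;> omega

theorem isWeaklyResolving_egArc (hd : 2 ≤ d) (hn : d + 1 ≤ n) :
    IsWeaklyResolving (egArc n d) ↑(Finset.Iio (⟨n - d, by omega⟩ : Fin n)) := by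
  refine isWeaklyResolving_of_forall_not_mem (isStronglyConnected_egArc hd hn)
    fun u v hu hv huv => ?_
  have h0S : (⟨0, by omega⟩ : Fin n) ∈ Finset.Iio (⟨n - d, by omega⟩ : Fin n) := by
    simp only [Finset.mem_Iio, Fin.lt_def]
    omega
  have h0 := congrArg Prod.fst (huv _ h0S)
  simp only [twoDist, ddist_egArc_zero hd hn, egDistFromZero] at h0
  simp only [Finset.coe_Iio, Set.mem_Iio, Fin.lt_def, not_lt] at hu hv
  apply Fin.ext
  split_ifs at h0 <;> omega

theorem card_le_of_isWeaklyResolving_egArc (hd : 2 ≤ d) (hn : d + 1 ≤ n) (S : Finset (Fin n))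
    (hS : IsWeaklyResolving (egArc n d) ↑S) : n - d ≤ S.card := by
  set L := Finset.Iic (⟨n - d, by omega⟩ : Fin n)
  have hL : (L \ S).card ≤ 1 := by
    refine Finset.card_le_one.mpr fun a ha b hb => ?_
    simp only [L, Finset.mem_sdiff, Finset.mem_Iic, Fin.le_def] at ha hb
    by_contra hab
    exact (hS.mem_or_mem_of_isDigraphAuto_swap hab
      (isDigraphAuto_egArc_swap hd hn ha.1 hb.1)).elim ha.2 hb.2
  have := Finset.card_le_card_sdiff_add_card (s := L) (t := S)
  rw [Fin.card_Iic, Fin.val_mk] at this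
  omega

end Example

/-- Example 2.3. The digraph `egArc n d` is strongly connected,
has `n` vertices, diameter `d`, and weak metric dimension `n - d`. -/
theorem egArc_properties (n d : ℕ) (hd : 2 ≤ d) (hn : d + 1 ≤ n) :
    IsStronglyConnected (egArc n d) ∧ Fintype.card (Fin n) = n ∧
    diam (egArc n d) = d ∧ wdim (egArc n d) = n - d :=
  ⟨isStronglyConnected_egArc hd hn, Fintype.card_fin n, diam_egArc hd hn,
    wdim_eq_of_forall_le (card_le_of_isWeaklyResolving_egArc hd hn)
      ⟨_, Fin.card_Iio _, isWeaklyResolving_egArc hd hn⟩⟩
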